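/- arXiv:1910.03845 — 3 statements merged into one kernel-verified Lean document; each statement's English description precedes it below -/
import Mathlib

section
/- Let f : M^{d×d} → [0,∞) be convex with f(0) = 0 and suppose there exist constants c₁, c₂ > 0 and p ∈ (1,∞) such that c₁|ζᵀ + ζ|^p ≤ f(ζ) ≤ c₂(|ζᵀ + ζ|^p + 1) for all d×d matrices ζ. Then f(ζ) = f((ζᵀ + ζ)/2) for every matrix ζ, i.e., f depends only on the symmetric part of its argument. -/
/-!
Along a line `ζ + t • v` with `v` skew-symmetric the symmetric part, hence the upper bound
`c₂ (|ζᵀ + ζ|^p + 1)`, does not change, and a convex function bounded above on a line is constant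
on it. The symmetric part `(ζᵀ + ζ)/2` lies on such a line through `ζ`.
-/

open Matrix

/-- The Frobenius norm of a real `d × d` matrix. -/
noncomputable def frobNorm {d : ℕ} (ζ : Matrix (Fin d) (Fin d) ℝ) : ℝ :=
  Real.sqrt (∑ i, ∑ j, (ζ i j) ^ 2)

open Filter Topology

namespace ConvexOn

variable {E : Type*} [AddCommGroup E] [Module ℝ E] {f : E → ℝ}

theorem sub_le_inv_mul_sub (hf : ConvexOn ℝ Set.univ f) (x v : E) {t : ℝ} (ht : 1 ≤ t) :
    f (x + v) - f x ≤ t⁻¹ * (f (x + t • v) - f x) := by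
  have ht₀ : 0 < t := one_pos.trans_le ht
  have hcomb : t⁻¹ • (x + t • v) + (1 - t⁻¹) • x = x + v := by
    rw [smul_add, smul_smul, inv_mul_cancel₀ ht₀.ne']
    module
  have hjensen := hf.2 (Set.mem_univ (x + t • v)) (Set.mem_univ x) (inv_nonneg.2 ht₀.le)
    (sub_nonneg.2 (inv_le_one_of_one_le₀ ht)) (add_sub_cancel _ _)
  rw [hcomb, smul_eq_mul, smul_eq_mul] at hjensen
  linarith

theorem le_of_bddAbove_ray (hf : ConvexOn ℝ Set.univ f) (x v : E) {C : ℝ}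
    (hC : ∀ t : ℝ, 1 ≤ t → f (x + t • v) ≤ C) : f (x + v) ≤ f x := by
  have hlim : Tendsto (fun t : ℝ ↦ t⁻¹ * (C - f x)) atTop (𝓝 0) := by
    simpa using tendsto_inv_atTop_zero.mul_const (C - f x)
  refine sub_nonpos.1 (ge_of_tendsto hlim ?_)
  filter_upwards [eventually_ge_atTop 1] with t ht
  calc f (x + v) - f x ≤ t⁻¹ * (f (x + t • v) - f x) := hf.sub_le_inv_mul_sub x v ht
    _ ≤ t⁻¹ * (C - f x) := by gcongr; exact hC t ht

theorem apply_add_eq_of_bddAbove_line (hf : ConvexOn ℝ Set.univ f) (x v : E) {C : ℝ}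
    (hC : ∀ t : ℝ, f (x + t • v) ≤ C) : f (x + v) = f x := by
  refine le_antisymm (hf.le_of_bddAbove_ray x v fun t _ ↦ hC t) ?_
  have := hf.le_of_bddAbove_ray (x + v) (-v) (C := C) fun t _ ↦ by
    convert hC (1 - t) using 2
    module
  simpa using this

end ConvexOn

theorem Matrix.transpose_add_self_add_of_transpose_eq_neg {n R : Type*} [AddCommGroup R]
    (A B : Matrix n n R) (hB : Bᵀ = -B) : (A + B)ᵀ + (A + B) = Aᵀ + A := by
  rw [transpose_add, hB]
  abel

theorem stmt4_general (d : ℕ) (f : Matrix (Fin d) (Fin d) ℝ → ℝ)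
    (hconv : ConvexOn ℝ Set.univ f)
    (c₂ p : ℝ)
    (hupp : ∀ ζ : Matrix (Fin d) (Fin d) ℝ, f ζ ≤ c₂ * ((frobNorm (ζᵀ + ζ)) ^ p + 1)) :
    ∀ ζ : Matrix (Fin d) (Fin d) ℝ, f ζ = f ((1/2 : ℝ) • (ζᵀ + ζ)) := by
  intro ζ
  set v : Matrix (Fin d) (Fin d) ℝ := (1/2 : ℝ) • (ζᵀ - ζ)
  have hv : ∀ t : ℝ, (t • v)ᵀ = -(t • v) := fun t ↦ by
    ext i j
    simp only [v, transpose_apply, Matrix.smul_apply, Matrix.sub_apply, Matrix.neg_apply,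
      smul_eq_mul]
    ring
  have hζv : ζ + v = (1/2 : ℝ) • (ζᵀ + ζ) := by
    simp only [v]
    module
  rw [← hζv, hconv.apply_add_eq_of_bddAbove_line ζ v (C := c₂ * (frobNorm (ζᵀ + ζ) ^ p + 1))]
  intro t
  simpa only [transpose_add_self_add_of_transpose_eq_neg ζ _ (hv t)] using hupp (ζ + t • v)

theorem stmt4 (d : ℕ) (f : Matrix (Fin d) (Fin d) ℝ → ℝ)
    (hconv : ConvexOn ℝ Set.univ f) (hf0 : f 0 = 0)
    (c₁ c₂ p : ℝ) (hc₁ : 0 < c₁) (hc₂ : 0 < c₂) (hp : 1 < p)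
    (hnonneg : ∀ ζ, 0 ≤ f ζ)
    (hlow : ∀ ζ : Matrix (Fin d) (Fin d) ℝ, c₁ * (frobNorm (ζᵀ + ζ)) ^ p ≤ f ζ)
    (hupp : ∀ ζ : Matrix (Fin d) (Fin d) ℝ, f ζ ≤ c₂ * ((frobNorm (ζᵀ + ζ)) ^ p + 1)) :
    ∀ ζ : Matrix (Fin d) (Fin d) ℝ, f ζ = f ((1/2 : ℝ) • (ζᵀ + ζ)) :=
  stmt4_general d f hconv c₂ p hupp
end

section
/- Let Ω ⊆ ℝ^d have finite Lebesgue measure and let (u_n) be a sequence of measurable functions Ω → ℝ^N satisfying the Cauchy-in-measure-type condition: the Lebesgue measure of ∩_{n∈ℕ} ∪_{m≥n} {x : |u_m(x) − u_n(x)| > 1} equals 0. Then there exist a subsequence (not relabeled) and an increasing concave function ψ : [0,∞) → [0,∞) with ψ(t) → ∞ as t → ∞ such that sup_n ∫_Ω ψ(|u_n|) dx < ∞. -/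
open MeasureTheory Filter Set
open scoped ENNReal Topology

/-!
The hypothesis says that for a.e. `x ∈ Ω` the sequence `u n x` eventually stays within distance
`1` of one of its terms, so `g = ⨆ n, ‖u n‖ₑ` is finite a.e. on `Ω`, and no subsequence is needed.
For such a `g` on a finite measure space choose thresholds `a j` with `μ {g > a j} ≤ 2⁻¹ ^ j` and
put `K j = 2 ^ j * a j`. The concave function `ψ t = ∑' j, min (t / K j) 1` tends to infinity, and
`min (f / K j) 1 ≤ 𝟙{g > a j} + 2⁻¹ ^ j` whenever `f ≤ g`, so `∫ ψ ∘ f ≤ 2 * (1 + μ univ)`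
uniformly over all such `f`.
-/

noncomputable def sumTruncLinear (K : ℕ → ℝ) (t : ℝ) : ℝ := ∑' j, min (t / K j) 1

section ConcaveTsum
variable {ι E : Type*} [AddCommMonoid E] [Module ℝ E] {s : Set E} {f : ι → E → ℝ}

theorem ConcaveOn.tsum (hf : ∀ i, ConcaveOn ℝ s (f i)) (hs : Convex ℝ s)
    (hsum : ∀ x ∈ s, Summable fun i => f i x) : ConcaveOn ℝ s fun x => ∑' i, f i x := by
  refine ⟨hs, fun x hx y hy a b ha hb hab => ?_⟩
  rw [smul_eq_mul, smul_eq_mul, ← tsum_mul_left, ← tsum_mul_left,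
    ← ((hsum x hx).mul_left a).tsum_add ((hsum y hy).mul_left b)]
  exact ((hsum x hx).mul_left a |>.add ((hsum y hy).mul_left b)).tsum_le_tsum
    (fun i => (hf i).2 hx hy ha hb hab) (hsum _ (hs hx hy ha hb hab))

end ConcaveTsum

namespace sumTruncLinear

variable {K : ℕ → ℝ}

lemma abs_min_div_one_le {t k : ℝ} (hk : 0 < k) : |min (t / k) 1| ≤ |t| / k := by
  rcases le_or_gt 0 t with ht | ht
  · rw [abs_of_nonneg (le_min (by positivity) zero_le_one), abs_of_nonneg ht]
    exact min_le_left _ _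
  · rw [min_eq_left ((div_neg_of_neg_of_pos ht hk).trans one_pos).le, abs_div, abs_of_pos hk]

lemma summable (hK : ∀ j, 0 < K j) (hKsum : Summable fun j => (K j)⁻¹) (t : ℝ) :
    Summable fun j => min (t / K j) 1 :=
  (hKsum.mul_left |t|).of_norm_bounded fun j =>
    (abs_min_div_one_le (hK j)).trans_eq (div_eq_mul_inv _ _)

lemma monotone_term (hK : ∀ j, 0 < K j) (j : ℕ) : Monotone fun t => min (t / K j) 1 :=
  fun _ _ hst => min_le_min_right _ (div_le_div_of_nonneg_right hst (hK j).le)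

lemma nonneg (hK : ∀ j, 0 < K j) {t : ℝ} (ht : 0 ≤ t) : 0 ≤ sumTruncLinear K t :=
  tsum_nonneg fun j => le_min (div_nonneg ht (hK j).le) zero_le_one

lemma monotone (hK : ∀ j, 0 < K j) (hKsum : Summable fun j => (K j)⁻¹) :
    Monotone (sumTruncLinear K) := fun s t hst =>
  (summable hK hKsum s).tsum_le_tsum (fun j => monotone_term hK j hst) (summable hK hKsum t)

lemma concaveOn (hK : ∀ j, 0 < K j) (hKsum : Summable fun j => (K j)⁻¹) :
    ConcaveOn ℝ univ (sumTruncLinear K) :=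
  ConcaveOn.tsum (fun j => ((LinearMap.mul ℝ ℝ (K j)⁻¹).concaveOn convex_univ).inf
    (concaveOn_const 1 convex_univ) |>.congr fun t _ => by simp [div_eq_inv_mul])
    convex_univ fun t _ => summable hK hKsum t

lemma tendsto_atTop_atTop (hK : ∀ j, 0 < K j) (hKsum : Summable fun j => (K j)⁻¹) :
    Tendsto (sumTruncLinear K) atTop atTop := by
  refine Filter.tendsto_atTop.2 fun b => ?_
  have hsat : ∀ᶠ t in atTop, ∀ j ∈ Finset.range ⌈b⌉₊, min (t / K j) 1 = 1 :=
    (Finset.eventually_all _).2 fun j _ => (eventually_ge_atTop (K j)).mono fun t ht =>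
      min_eq_right ((one_le_div (hK j)).2 ht)
  filter_upwards [hsat, eventually_ge_atTop 0] with t ht ht0
  calc b ≤ ⌈b⌉₊ := Nat.le_ceil b
    _ = ∑ j ∈ Finset.range ⌈b⌉₊, min (t / K j) 1 := by simp [Finset.sum_congr rfl ht]
    _ ≤ sumTruncLinear K t := (summable hK hKsum t).sum_le_tsum _
          fun j _ => le_min (div_nonneg ht0 (hK j).le) zero_le_one

end sumTruncLinear

lemma iSup_enorm_lt_top_of_forall_ge {E : Type*} [SeminormedAddGroup E] {v : ℕ → E} {n : ℕ}
    {C : NNReal} (h : ∀ m ≥ n, ‖v m - v n‖₊ ≤ C) : ⨆ m, ‖v m‖ₑ < ∞ :=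
  ENNReal.iSup_coe_lt_top.2 <| IsBoundedUnder.bddAbove_range <| isBoundedUnder_of_eventually_le <|
    eventually_atTop.2 ⟨n, fun m hm => (nnnorm_le_nnnorm_add_nnnorm_sub' _ (v n)).trans
      (add_le_add le_rfl (h m hm))⟩

section Domination

variable {α : Type*} [MeasurableSpace α] {μ : Measure α} {g : α → ℝ≥0∞}

lemma tendsto_measure_natCast_lt [IsFiniteMeasure μ] (hg : AEMeasurable g μ)
    (hg_fin : ∀ᵐ x ∂μ, g x ≠ ∞) :
    Tendsto (fun n : ℕ => μ {x | (n : ℝ≥0∞) < g x}) atTop (𝓝 0) := by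
  have hInter : μ (⋂ n : ℕ, {x | (n : ℝ≥0∞) < g x}) = 0 := by
    refine measure_mono_null (fun x hx => ?_) (ae_iff.1 hg_fin)
    refine not_not.2 (Classical.byContradiction fun hfx => ?_)
    obtain ⟨n, hn⟩ := ENNReal.exists_nat_gt hfx
    exact (mem_iInter.1 hx n).not_gt hn
  have h : Tendsto (fun n : ℕ => μ {x | (n : ℝ≥0∞) < g x}) atTop
      (𝓝 (μ (⋂ n : ℕ, {x | (n : ℝ≥0∞) < g x}))) :=
    tendsto_measure_iInter_atTop (fun n => hg.nullMeasurable measurableSet_Ioi)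
      (fun m n hmn x (hx : (n : ℝ≥0∞) < g x) => (Nat.cast_le.2 hmn).trans_lt hx)
      ⟨0, measure_ne_top μ _⟩
  rwa [hInter] at h

lemma lintegral_ofReal_min_div_le {f : α → ℝ} (hfg : ∀ x, ENNReal.ofReal (f x) ≤ g x) {a k : ℝ}
    (ha : 0 ≤ a) (hk : 0 < k) :
    ∫⁻ x, ENNReal.ofReal (min (f x / k) 1) ∂μ
      ≤ μ {x | ENNReal.ofReal a < g x} + ENNReal.ofReal (a / k) * μ univ := by
  set S := {x | ENNReal.ofReal a < g x}
  have hpt : ∀ x, ENNReal.ofReal (min (f x / k) 1) ≤ S.indicator 1 x + ENNReal.ofReal (a / k) := by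
    intro x
    by_cases hx : x ∈ S
    · rw [indicator_of_mem hx, Pi.one_apply]
      exact le_add_right (ENNReal.ofReal_le_one.2 (min_le_right _ _))
    · have hfa : f x ≤ a := (ENNReal.ofReal_le_ofReal_iff ha).1 ((hfg x).trans (not_lt.1 hx))
      rw [indicator_of_notMem hx, zero_add]
      exact ENNReal.ofReal_le_ofReal
        ((min_le_left _ _).trans (div_le_div_of_nonneg_right hfa hk.le))
  calc ∫⁻ x, ENNReal.ofReal (min (f x / k) 1) ∂μ
      ≤ ∫⁻ x, (S.indicator 1 x + ENNReal.ofReal (a / k)) ∂μ := lintegral_mono hpt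
    _ = ∫⁻ x, S.indicator 1 x ∂μ + ENNReal.ofReal (a / k) * μ univ := by
      rw [lintegral_add_right _ measurable_const, lintegral_const]
    _ ≤ μ S + ENNReal.ofReal (a / k) * μ univ := by
      gcongr
      exact lintegral_indicator_one_le S

theorem exists_lintegral_sumTruncLinear_le [IsFiniteMeasure μ] (hg : AEMeasurable g μ)
    (hg_fin : ∀ᵐ x ∂μ, g x ≠ ∞) :
    ∃ K : ℕ → ℝ, (∀ j, 0 < K j) ∧ (Summable fun j => (K j)⁻¹) ∧
      ∀ f : α → ℝ, AEMeasurable f μ → (∀ x, 0 ≤ f x) → (∀ x, ENNReal.ofReal (f x) ≤ g x) →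
        ∫⁻ x, ENNReal.ofReal (sumTruncLinear K (f x)) ∂μ ≤ 2 * (1 + μ univ) := by
  have hsel (j : ℕ) : ∃ n : ℕ, 1 ≤ n ∧ μ {x | (n : ℝ≥0∞) < g x} ≤ 2⁻¹ ^ j :=
    (((tendsto_measure_natCast_lt hg hg_fin).eventually
      (ge_mem_nhds (ENNReal.pow_pos (by norm_num) j))).and (eventually_ge_atTop 1)).exists.imp
      fun n hn => ⟨hn.2, hn.1⟩
  choose a ha1 ha using hsel
  have hapos (j : ℕ) : (0 : ℝ) < a j := by exact_mod_cast ha1 j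
  set K : ℕ → ℝ := fun j => 2 ^ j * a j
  have hK (j : ℕ) : 0 < K j := mul_pos (by positivity) (hapos j)
  have hratio (j : ℕ) : (a j : ℝ) / K j = ((2 : ℝ) ^ j)⁻¹ := by
    simp only [K]
    field_simp [(hapos j).ne']
  have hKsum : Summable fun j => (K j)⁻¹ :=
    summable_geometric_two.of_nonneg_of_le (fun j => (inv_pos.2 (hK j)).le) fun j => by
      rw [one_div, inv_pow]
      exact inv_anti₀ (by positivity)
        (le_mul_of_one_le_right (by positivity) (by exact_mod_cast ha1 j))
  refine ⟨K, hK, hKsum, fun f hf hf0 hfg => ?_⟩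
  have hterm (j : ℕ) :
      ∫⁻ x, ENNReal.ofReal (min (f x / K j) 1) ∂μ ≤ 2⁻¹ ^ j * (1 + μ univ) := by
    have h := lintegral_ofReal_min_div_le (μ := μ) hfg (Nat.cast_nonneg (a j)) (hK j)
    rw [ENNReal.ofReal_natCast, hratio, ENNReal.ofReal_inv_of_pos (by positivity),
      ENNReal.ofReal_pow zero_le_two, ENNReal.ofReal_ofNat, ENNReal.inv_pow] at h
    rw [mul_add, mul_one]
    exact h.trans (add_le_add (ha j) le_rfl)
  calc ∫⁻ x, ENNReal.ofReal (sumTruncLinear K (f x)) ∂μ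
      = ∫⁻ x, ∑' j, ENNReal.ofReal (min (f x / K j) 1) ∂μ := lintegral_congr fun x =>
        ENNReal.ofReal_tsum_of_nonneg (fun j => le_min (div_nonneg (hf0 x) (hK j).le) zero_le_one)
          (sumTruncLinear.summable hK hKsum _)
    _ = ∑' j, ∫⁻ x, ENNReal.ofReal (min (f x / K j) 1) ∂μ := lintegral_tsum fun j =>
        ENNReal.measurable_ofReal.comp_aemeasurable
          ((sumTruncLinear.monotone_term hK j).measurable.comp_aemeasurable hf)
    _ ≤ ∑' j, 2⁻¹ ^ j * (1 + μ univ) := ENNReal.tsum_le_tsum hterm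
    _ = 2 * (1 + μ univ) := by
      rw [ENNReal.tsum_mul_right, ENNReal.tsum_geometric, ENNReal.one_sub_inv_two, inv_inv]

end Domination

lemma ae_restrict_iSup_enorm_ne_top {α E : Type*} [MeasurableSpace α] [SeminormedAddGroup E]
    [MeasurableSpace E] [OpensMeasurableSpace E] {μ : Measure α} {Ω : Set α} {u : ℕ → α → E}
    (hu : ∀ n, Measurable (u n))
    (hcauchy : μ (⋂ n, ⋃ m, ⋃ _ : n ≤ m, {x ∈ Ω | 1 < ‖u m x - u n x‖}) = 0) :
    ∀ᵐ x ∂μ.restrict Ω, ⨆ n, ‖u n x‖ₑ ≠ ∞ := by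
  have hg : Measurable fun x => ⨆ n, ‖u n x‖ₑ := Measurable.iSup fun n => (hu n).enorm
  refine (ae_restrict_iff (hg (measurableSet_singleton ∞).compl)).2 ?_
  filter_upwards [measure_eq_zero_iff_ae_notMem.1 hcauchy] with x hx hxΩ
  simp only [mem_iInter, mem_iUnion, not_forall, not_exists] at hx
  obtain ⟨n, hn⟩ := hx
  refine (iSup_enorm_lt_top_of_forall_ge (n := n) (C := 1) fun m hm => ?_).ne
  have h := hn m hm
  simp only [mem_ofPred_eq, hxΩ, true_and, not_lt] at h
  exact_mod_cast h

theorem stmt7_general (d N : ℕ) (Ω : Set (EuclideanSpace ℝ (Fin d)))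
    (hfin : volume Ω < ⊤)
    (u : ℕ → EuclideanSpace ℝ (Fin d) → EuclideanSpace ℝ (Fin N))
    (hmeas : ∀ n, Measurable (u n))
    (hcauchy : volume (⋂ n, ⋃ m, ⋃ _ : n ≤ m, {x ∈ Ω | 1 < ‖u m x - u n x‖}) = 0) :
    ∃ σ : ℕ → ℕ, StrictMono σ ∧ ∃ ψ : ℝ → ℝ,
      MonotoneOn ψ (Set.Ici 0) ∧ ConcaveOn ℝ (Set.Ici 0) ψ ∧ (∀ t, 0 ≤ t → 0 ≤ ψ t) ∧
      Tendsto ψ atTop atTop ∧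
      ∃ C : ℝ, ∀ n, (∫ x in Ω, ψ ‖u (σ n) x‖) ≤ C := by
  have : IsFiniteMeasure (volume.restrict Ω) := isFiniteMeasure_restrict.2 hfin.ne
  obtain ⟨K, hK, hKsum, hbound⟩ := exists_lintegral_sumTruncLinear_le
    (Measurable.iSup fun n => (hmeas n).enorm).aemeasurable
    (ae_restrict_iSup_enorm_ne_top hmeas hcauchy)
  have hψ := sumTruncLinear.monotone hK hKsum
  refine ⟨id, strictMono_id, sumTruncLinear K, hψ.monotoneOn _,
    (sumTruncLinear.concaveOn hK hKsum).subset (subset_univ _) (convex_Ici 0),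
    fun t ht => sumTruncLinear.nonneg hK ht, sumTruncLinear.tendsto_atTop_atTop hK hKsum,
    (2 * (1 + volume Ω)).toReal, fun n => ?_⟩
  rw [id, integral_eq_lintegral_of_nonneg_ae
    (ae_of_all _ fun x => sumTruncLinear.nonneg hK (norm_nonneg _))
    (hψ.measurable.comp (hmeas n).norm).aestronglyMeasurable]
  refine ENNReal.toReal_mono (by finiteness) ?_
  simpa using hbound _ (hmeas n).norm.aemeasurable (fun x => norm_nonneg _)
    fun x => (ofReal_norm _).trans_le (le_iSup (fun m => ‖u m x‖ₑ) n)

theorem stmt7 (d N : ℕ) (Ω : Set (EuclideanSpace ℝ (Fin d))) (hΩ : MeasurableSet Ω)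
    (hfin : volume Ω < ⊤)
    (u : ℕ → EuclideanSpace ℝ (Fin d) → EuclideanSpace ℝ (Fin N))
    (hmeas : ∀ n, Measurable (u n))
    (hcauchy : volume (⋂ n, ⋃ m, ⋃ _ : n ≤ m, {x ∈ Ω | 1 < ‖u m x - u n x‖}) = 0) :
    ∃ σ : ℕ → ℕ, StrictMono σ ∧ ∃ ψ : ℝ → ℝ,
      MonotoneOn ψ (Set.Ici 0) ∧ ConcaveOn ℝ (Set.Ici 0) ψ ∧ (∀ t, 0 ≤ t → 0 ≤ ψ t) ∧
      Tendsto ψ atTop atTop ∧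
      ∃ C : ℝ, ∀ n, (∫ x in Ω, ψ ‖u (σ n) x‖) ≤ C :=
  stmt7_general d N Ω hfin u hmeas hcauchy
end

section
/- Let f : M^{d×d}_sym → [0,∞) be convex, let Ω ⊆ ℝ^d be open and bounded, and let (A, A_n) ⊆ Ω be measurable sets with χ_{A_n} → χ_A in L¹(Ω), and (e_n) ⊆ L^p(Ω; M^{d×d}_sym) with e_n χ_{A_n} ⇀ e χ_A weakly in L^p for some e ∈ L^p(Ω; M^{d×d}_sym), where p ∈ (1,∞) and f satisfies f(ζ) ≤ c(|ζ|^p + 1). Then ∫_A f(e) dx ≤ liminf_n ∫_{A_n} f(e_n) dx. -/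
/-!
A continuous convex `f` is the supremum of countably many affine minorants `L i = l i + c i`.
For an affine integrand the integral over `A n ∩ B` passes to the limit: test the weak
convergence against `χ_B` times the Riesz representative of `l i`, and use
`|A n ∩ B| → |A ∩ B|`. Splitting `A` according to which `L i` realizes `max_{i ≤ k} L i (e x)`
gives `∫_A max_{i ≤ k} L i ∘ e ≤ liminf ∫_{A n} f ∘ e n`, and monotone convergence in `k`
concludes. The `liminf` is a genuine one because a weakly convergent sequence is bounded in
`L^p` (uniform boundedness), so by the growth bound the integrals on the right are bounded.
-/

open MeasureTheory Filter Set Function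
open scoped ENNReal RealInnerProductSpace

section Duality

variable {X E : Type*} [MeasurableSpace X] {μ : Measure X}
  [NormedAddCommGroup E] [InnerProductSpace ℝ E] {p q : ℝ}

theorem lpNorm_le_of_integral_inner_le (hpq : p.HolderConjugate q) {u : X → E}
    (hu : MemLp u (ENNReal.ofReal p) μ) {C : ℝ} (hC0 : 0 ≤ C)
    (hC : ∀ g : X → E, MemLp g (ENNReal.ofReal q) μ →
      ∫ x, ⟪u x, g x⟫ ∂μ ≤ C * lpNorm g (ENNReal.ofReal q) μ) :
    lpNorm u (ENNReal.ofReal p) μ ≤ C := by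
  have hp0 := hpq.pos
  set t := ∫ x, ‖u x‖ ^ p ∂μ
  have ht0 : 0 ≤ t := integral_nonneg fun x => by positivity
  -- the function `‖u‖ ^ (p - 2) • u` realizes the dual norm of `u`
  set g : X → E := fun x => ‖u x‖ ^ (p - 2) • u x
  have hg_norm : ∀ x, ‖g x‖ = ‖u x‖ ^ (p - 1) := by
    intro x
    rcases eq_or_ne (u x) 0 with h | h
    · simp [g, h, Real.zero_rpow (by linarith [hpq.lt] : p - 1 ≠ 0)]
    · rw [norm_smul, Real.norm_of_nonneg (by positivity), show p - 1 = p - 2 + 1 by ring,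
        Real.rpow_add_one (norm_ne_zero_iff.2 h)]
  have hg : MemLp g (ENNReal.ofReal q) μ := by
    have h := hu.norm_rpow_div (ENNReal.ofReal (p - 1))
    rw [ENNReal.toReal_ofReal (by linarith [hpq.lt]),
      ← ENNReal.ofReal_div_of_pos (by linarith [hpq.lt]), ← hpq.conjugate_eq] at h
    refine h.of_le ?_ (.of_forall fun x => by rw [hg_norm, Real.norm_of_nonneg (by positivity)])
    exact (hu.1.norm.aemeasurable.pow_const _).aestronglyMeasurable.smul hu.1
  have hpair : ∫ x, ⟪u x, g x⟫ ∂μ = t := by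
    refine integral_congr_ae (.of_forall fun x => ?_)
    rcases eq_or_ne (u x) 0 with h | h
    · simp [g, h, Real.zero_rpow hp0.ne']
    · simp only [g, real_inner_smul_right, real_inner_self_eq_norm_sq]
      rw [← Real.rpow_natCast, ← Real.rpow_add (norm_pos_iff.2 h)]
      norm_num
  have hg_lpNorm : lpNorm g (ENNReal.ofReal q) μ = t ^ q⁻¹ := by
    rw [lpNorm_eq_integral_norm_rpow_toReal (by simpa using hpq.symm.pos) ENNReal.ofReal_ne_top
      hg.1, ENNReal.toReal_ofReal hpq.symm.nonneg]
    congr 1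
    refine integral_congr_ae (.of_forall fun x => ?_)
    simp only [hg_norm, ← Real.rpow_mul (norm_nonneg _), hpq.sub_one_mul_conj]
  have hu_lpNorm : lpNorm u (ENNReal.ofReal p) μ = t ^ p⁻¹ := by
    rw [lpNorm_eq_integral_norm_rpow_toReal (by simpa using hp0) ENNReal.ofReal_ne_top hu.1,
      ENNReal.toReal_ofReal hp0.le]
  have hkey : t ≤ C * t ^ q⁻¹ := by simpa only [hpair, hg_lpNorm] using hC g hg
  rw [hu_lpNorm]
  rcases ht0.eq_or_lt with ht | ht
  · rw [← ht, Real.zero_rpow (inv_pos.2 hp0).ne']; exact hC0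
  · refine le_of_mul_le_mul_right ?_ (Real.rpow_pos_of_pos ht q⁻¹)
    rwa [← Real.rpow_add ht, hpq.inv_add_inv_eq_one, Real.rpow_one]

theorem bddAbove_lpNorm_of_forall_tendsto_integral_inner [CompleteSpace E]
    (hpq : p.HolderConjugate q) {u : ℕ → X → E} (hu : ∀ n, MemLp (u n) (ENNReal.ofReal p) μ)
    (hlim : ∀ g : X → E, MemLp g (ENNReal.ofReal q) μ →
      ∃ l, Tendsto (fun n => ∫ x, ⟪u n x, g x⟫ ∂μ) atTop (nhds l)) :
    BddAbove (range fun n => lpNorm (u n) (ENNReal.ofReal p) μ) := by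
  have := hpq.ennrealOfReal
  have : Fact (1 ≤ ENNReal.ofReal p) := ⟨ENNReal.one_le_ofReal.2 hpq.lt.le⟩
  have : Fact (1 ≤ ENNReal.ofReal q) := ⟨ENNReal.one_le_ofReal.2 hpq.symm.lt.le⟩
  let Φ := fun n => (innerSL ℝ (E := E)).lpPairing μ (ENNReal.ofReal p) (ENNReal.ofReal q)
    ((hu n).toLp (u n))
  have hΦ : ∀ n g, Φ n g = ∫ x, ⟪u n x, g x⟫ ∂μ := fun n g => by
    rw [ContinuousLinearMap.lpPairing_eq_integral]
    exact integral_congr_ae ((hu n).coeFn_toLp.mono fun x hx => by simp only [hx]; rfl)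
  obtain ⟨C, hC⟩ := banach_steinhaus (g := Φ) fun g : Lp E (ENNReal.ofReal q) μ => by
    obtain ⟨l, hl⟩ := hlim g (Lp.memLp g)
    obtain ⟨C, hC⟩ := (hl.norm).bddAbove_range
    exact ⟨C, fun n => by simpa only [hΦ] using hC (mem_range_self n)⟩
  refine ⟨C, forall_mem_range.2 fun n => ?_⟩
  refine lpNorm_le_of_integral_inner_le hpq (hu n) ((norm_nonneg _).trans (hC n)) fun g hg => ?_
  calc ∫ x, ⟪u n x, g x⟫ ∂μ = Φ n (hg.toLp g) := by
        rw [hΦ]; exact integral_congr_ae (hg.coeFn_toLp.mono fun x hx => by simp only [hx])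
    _ ≤ ‖Φ n‖ * ‖hg.toLp g‖ := (le_abs_self _).trans ((Φ n).le_opNorm _)
    _ ≤ C * lpNorm g (ENNReal.ofReal q) μ := by
        rw [Lp.norm_toLp, toReal_eLpNorm hg.1]
        exact mul_le_mul_of_nonneg_right (hC n) lpNorm_nonneg

end Duality

section PartialSups

variable {X E : Type*} [MeasurableSpace X] {μ : Measure X} [TopologicalSpace E]

theorem exists_partition_partialSups_eq {φ : ℕ → X → ℝ} (hφ : ∀ i, Measurable (φ i)) (k : ℕ) :
    ∃ B : ℕ → Set X, (∀ i, MeasurableSet (B i)) ∧ Pairwise (Disjoint on B) ∧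
      ⋃ i ∈ Finset.range (k + 1), B i = univ ∧ ∀ i, ∀ x ∈ B i, partialSups φ k x = φ i x := by
  set S : ℕ → Set X := fun i => {x | partialSups φ k x = φ i x}
  have hmax : Measurable (partialSups φ k) :=
    Finset.measurable_sup' Finset.nonempty_Iic fun i _ => hφ i
  refine ⟨disjointed S, .disjointed fun i => measurableSet_eq_fun hmax (hφ i),
    disjoint_disjointed S, ?_, fun i x hx => disjointed_subset S i hx⟩
  rw [biUnion_range_succ_disjointed, eq_univ_iff_forall]
  intro x
  obtain ⟨j, hjk, hj⟩ := exists_partialSups_eq (φ · x) k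
  exact le_partialSups_of_le S hjk (show x ∈ S j by simpa [S, Pi.partialSups_apply] using hj)

theorem tendsto_integral_partialSups_comp {L : ℕ → E → ℝ} {f : E → ℝ}
    (hL : ∀ i, Continuous (L i)) (hlub : ∀ z, IsLUB (range fun i => L i z) (f z))
    {e : X → E} (he : AEStronglyMeasurable e μ) (hL0 : Integrable (fun x => L 0 (e x)) μ)
    (hf : Integrable (fun x => f (e x)) μ) :
    Tendsto (fun k => ∫ x, partialSups L k (e x) ∂μ) atTop (nhds (∫ x, f (e x) ∂μ)) := by
  have hle : ∀ k z, partialSups L k z ≤ f z := fun k z => by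
    rw [Pi.partialSups_apply]
    exact partialSups_le _ _ _ fun i _ => (hlub z).1 (mem_range_self i)
  refine integral_tendsto_of_tendsto_of_monotone (fun k => ?_) hf
    (.of_forall fun x k l hkl => partialSups_monotone L hkl (e x)) (.of_forall fun x => ?_)
  · exact integrable_of_le_of_le
      ((Continuous.partialSups fun i _ => hL i).comp_aestronglyMeasurable he)
      (.of_forall fun x => le_partialSups_of_le L k.zero_le (e x))
      (.of_forall fun x => hle k (e x)) hL0 hf
  · simp only [Pi.partialSups_apply]
    refine tendsto_atTop_isLUB (partialSups_monotone _) ?_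
    rw [IsLUB, upperBounds_range_partialSups]
    exact hlub (e x)

theorem sum_setIntegral_inter_le_setIntegral {ι : Type*} (s : Finset ι) {B : ι → Set X}
    (hB : ∀ i, MeasurableSet (B i)) (hBd : Pairwise (Disjoint on B)) {C : Set X}
    (hC : MeasurableSet C) {F : X → ℝ} {G : ι → X → ℝ} (hF0 : ∀ x, 0 ≤ F x)
    (hGF : ∀ i x, G i x ≤ F x) (hF : IntegrableOn F C μ) (hG : ∀ i, IntegrableOn (G i) C μ) :
    ∑ i ∈ s, ∫ x in C ∩ B i, G i x ∂μ ≤ ∫ x in C, F x ∂μ :=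
  calc ∑ i ∈ s, ∫ x in C ∩ B i, G i x ∂μ
      ≤ ∑ i ∈ s, ∫ x in C ∩ B i, F x ∂μ := Finset.sum_le_sum fun i _ =>
        setIntegral_mono ((hG i).mono_set inter_subset_left) (hF.mono_set inter_subset_left)
          (hGF i)
    _ = ∫ x in ⋃ i ∈ s, C ∩ B i, F x ∂μ := (integral_biUnion_finset s
        (fun i _ => hC.inter (hB i))
        (fun _ _ _ _ hij => (hBd hij).mono inter_subset_right inter_subset_right)
        fun _ _ => hF.mono_set inter_subset_left).symm
    _ ≤ ∫ x in C, F x ∂μ := setIntegral_mono_set hF (.of_forall hF0)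
        (iUnion₂_subset fun _ _ => inter_subset_left).eventuallyLE

theorem setIntegral_partialSups_le_liminf {A : Set X} {An : ℕ → Set X} {e : X → E}
    {en : ℕ → X → E} {f : E → ℝ} {L : ℕ → E → ℝ}
    (hL : ∀ i, Continuous (L i)) (hLf : ∀ i z, L i z ≤ f z) (hf0 : ∀ z, 0 ≤ f z)
    (hA : MeasurableSet A) (hAn : ∀ n, MeasurableSet (An n))
    (he : AEStronglyMeasurable e (μ.restrict A))
    (hLe : ∀ i, IntegrableOn (fun x => L i (e x)) A μ)
    (hLen : ∀ i n, IntegrableOn (fun x => L i (en n x)) (An n) μ)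
    (hfen : ∀ n, IntegrableOn (fun x => f (en n x)) (An n) μ)
    (hbdd : IsCoboundedUnder (· ≥ ·) atTop fun n => ∫ x in An n, f (en n x) ∂μ)
    (hlim : ∀ i B, MeasurableSet B → Tendsto (fun n => ∫ x in An n ∩ B, L i (en n x) ∂μ) atTop
      (nhds (∫ x in A ∩ B, L i (e x) ∂μ))) (k : ℕ) :
    ∫ x in A, partialSups L k (e x) ∂μ ≤ liminf (fun n => ∫ x in An n, f (en n x) ∂μ) atTop := by
  obtain ⟨B, hBm, hBd, hBU, hPB⟩ := exists_partition_partialSups_eq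
    (fun i => ((hL i).comp_stronglyMeasurable he.stronglyMeasurable_mk).measurable) k
  have hPL : ∀ i, (fun x => L i (e x)) =ᵐ[μ.restrict (A ∩ B i)] fun x => partialSups L k (e x) := by
    intro i
    have hmk : e =ᵐ[μ.restrict (A ∩ B i)] he.mk e :=
      ae_restrict_of_ae_restrict_of_subset inter_subset_left he.ae_eq_mk
    filter_upwards [hmk, ae_restrict_mem (hA.inter (hBm i))] with x hx hxB
    have := hPB i x hxB.2
    simp only [Pi.partialSups_apply] at this
    rw [hx, Pi.partialSups_apply, this]
  have hsplit : ∫ x in A, partialSups L k (e x) ∂μ =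
      ∑ i ∈ Finset.range (k + 1), ∫ x in A ∩ B i, L i (e x) ∂μ := by
    conv_lhs => rw [← inter_univ A, ← hBU, inter_iUnion₂]
    rw [integral_biUnion_finset _ (fun i _ => hA.inter (hBm i))
      (fun _ _ _ _ hij => (hBd hij).mono inter_subset_right inter_subset_right)
      fun i _ => ((hLe i).mono_set inter_subset_left).congr_fun_ae (hPL i)]
    exact Finset.sum_congr rfl fun i _ => (integral_congr_ae (hPL i)).symm
  have htend := tendsto_finsetSum (Finset.range (k + 1)) fun i _ => hlim i (B i) (hBm i)
  rw [hsplit, ← htend.liminf_eq]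
  refine liminf_le_liminf (.of_forall fun n => ?_) htend.isBoundedUnder_ge hbdd
  exact sum_setIntegral_inter_le_setIntegral _ hBm hBd (hAn n) (fun _ => hf0 _)
    (fun i _ => hLf i _) (hfen n) fun i => hLen i n

end PartialSups

section Sequences

variable {X E : Type*} [MeasurableSpace X] {μ : Measure X}
  [NormedAddCommGroup E] [InnerProductSpace ℝ E]
  {A B : Set X} {An : ℕ → Set X} {e : X → E} {en : ℕ → X → E}

theorem tendsto_measureReal_inter [IsFiniteMeasure μ] (hA : MeasurableSet A)
    (hAn : ∀ n, MeasurableSet (An n))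
    (hχ : Tendsto (fun n => ∫ x, |(An n).indicator (fun _ => (1 : ℝ)) x -
      A.indicator (fun _ => (1 : ℝ)) x| ∂μ) atTop (nhds 0)) (B : Set X) :
    Tendsto (fun n => μ.real (An n ∩ B)) atTop (nhds (μ.real (A ∩ B))) := by
  have hint : ∀ S, MeasurableSet S → Integrable (S.indicator fun _ => (1 : ℝ)) μ :=
    fun S hS => (integrable_const 1).indicator hS
  have hreal : ∀ S, MeasurableSet S →
      μ.real (S ∩ B) = ∫ x in B, S.indicator (fun _ => (1 : ℝ)) x ∂μ := fun S hS => by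
    rw [← measureReal_restrict_apply hS, ← integral_indicator_one hS]; rfl
  refine tendsto_iff_norm_sub_tendsto_zero.2
    (squeeze_zero (fun _ => norm_nonneg _) (fun n => ?_) hχ)
  rw [hreal _ (hAn n), hreal _ hA, ← integral_sub (hint _ (hAn n)).integrableOn
    (hint _ hA).integrableOn]
  refine (norm_integral_le_integral_norm _).trans ?_
  exact setIntegral_le_integral ((hint _ (hAn n)).sub (hint _ hA)).norm
    (.of_forall fun _ => norm_nonneg _)

theorem integral_inner_indicator_indicator_const {S : Set X} (hS : MeasurableSet S)
    (hB : MeasurableSet B) (u : X → E) (w : E) :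
    ∫ x, ⟪S.indicator u x, B.indicator (fun _ => w) x⟫ ∂μ = ∫ x in S ∩ B, ⟪u x, w⟫ ∂μ := by
  rw [← integral_indicator (hS.inter hB)]
  congr 1 with x
  by_cases hxS : x ∈ S <;> by_cases hxB : x ∈ B <;> simp [hxS, hxB]

theorem tendsto_setIntegral_inter_affine [IsFiniteMeasure μ] [CompleteSpace E] {q : ℝ}
    (hA : MeasurableSet A) (hAn : ∀ n, MeasurableSet (An n))
    (hχ : Tendsto (fun n => ∫ x, |(An n).indicator (fun _ => (1 : ℝ)) x -
      A.indicator (fun _ => (1 : ℝ)) x| ∂μ) atTop (nhds 0))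
    (hweak : ∀ g : X → E, MemLp g (ENNReal.ofReal q) μ →
      Tendsto (fun n => ∫ x, ⟪(An n).indicator (en n) x, g x⟫ ∂μ) atTop
        (nhds (∫ x, ⟪A.indicator e x, g x⟫ ∂μ)))
    (he : IntegrableOn e A μ) (hen : ∀ n, IntegrableOn (en n) (An n) μ)
    (l : StrongDual ℝ E) (c : ℝ) (hB : MeasurableSet B) :
    Tendsto (fun n => ∫ x in An n ∩ B, l (en n x) + c ∂μ) atTop
      (nhds (∫ x in A ∩ B, l (e x) + c ∂μ)) := by
  set w := (InnerProductSpace.toDual ℝ E).symm l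
  have hl : ∀ z, ⟪z, w⟫ = l z := fun z => by
    rw [real_inner_comm, InnerProductSpace.toDual_symm_apply]
  have hsplit : ∀ S (u : X → E), MeasurableSet S → IntegrableOn u S μ →
      ∫ x in S ∩ B, l (u x) + c ∂μ = ∫ x, ⟪S.indicator u x, B.indicator (fun _ => w) x⟫ ∂μ +
        μ.real (S ∩ B) * c := fun S u hS hu => by
    rw [integral_add (IntegrableOn.mono_set (l.integrable_comp hu) inter_subset_left)
      (integrable_const c), setIntegral_const, smul_eq_mul,
      integral_inner_indicator_indicator_const hS hB]
    simp only [hl]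
  have hg : MemLp (B.indicator fun _ => w) (ENNReal.ofReal q) μ :=
    (memLp_top_const w).indicator hB |>.mono_exponent le_top
  simp only [fun n => hsplit _ _ (hAn n) (hen n), hsplit _ _ hA he]
  exact (hweak _ hg).add ((tendsto_measureReal_inter hA hAn hχ B).mul_const c)

end Sequences

section Growth

variable {X E : Type*} [MeasurableSpace X] {μ : Measure X} [IsFiniteMeasure μ]
  [NormedAddCommGroup E] {f : E → ℝ} {p C : ℝ} {u : X → E}

theorem MeasureTheory.MemLp.integrable_mul_norm_rpow_add_one (hp : 0 < p)
    (hu : MemLp u (ENNReal.ofReal p) μ) :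
    Integrable (fun x => C * (‖u x‖ ^ p + 1)) μ := by
  have h := hu.integrable_norm_rpow'
  rw [ENNReal.toReal_ofReal hp.le] at h
  exact (h.add (integrable_const 1)).const_mul C

theorem MeasureTheory.MemLp.integrable_comp_of_growth (hf : Continuous f) (hf0 : ∀ z, 0 ≤ f z)
    (hp : 0 < p) (hgrowth : ∀ z, f z ≤ C * (‖z‖ ^ p + 1)) (hu : MemLp u (ENNReal.ofReal p) μ) :
    Integrable (fun x => f (u x)) μ :=
  (hu.integrable_mul_norm_rpow_add_one hp).mono' (hf.comp_aestronglyMeasurable hu.1)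
    (.of_forall fun x => by rw [Real.norm_of_nonneg (hf0 _)]; exact hgrowth _)

theorem MeasureTheory.MemLp.integral_comp_le_of_growth (hf : Continuous f) (hf0 : ∀ z, 0 ≤ f z)
    (hp : 0 < p) (hgrowth : ∀ z, f z ≤ C * (‖z‖ ^ p + 1)) (hu : MemLp u (ENNReal.ofReal p) μ) :
    ∫ x, f (u x) ∂μ ≤ C * (lpNorm u (ENNReal.ofReal p) μ ^ p + μ.real univ) := by
  have hnorm : lpNorm u (ENNReal.ofReal p) μ ^ p = ∫ x, ‖u x‖ ^ p ∂μ := by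
    rw [lpNorm_eq_integral_norm_rpow_toReal (by simpa using hp) ENNReal.ofReal_ne_top hu.1,
      ENNReal.toReal_ofReal hp.le, Real.rpow_inv_rpow (integral_nonneg fun _ => by positivity)
        hp.ne']
  have hint := hu.integrable_norm_rpow'
  rw [ENNReal.toReal_ofReal hp.le] at hint
  calc ∫ x, f (u x) ∂μ ≤ ∫ x, C * (‖u x‖ ^ p + 1) ∂μ :=
        integral_mono (hu.integrable_comp_of_growth hf hf0 hp hgrowth)
          (hu.integrable_mul_norm_rpow_add_one hp) fun x => hgrowth _
    _ = C * (lpNorm u (ENNReal.ofReal p) μ ^ p + μ.real univ) := by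
        rw [integral_const_mul, integral_add hint (integrable_const 1), hnorm, integral_const,
          smul_eq_mul, mul_one]

theorem isCoboundedUnder_setIntegral_comp_of_growth {An : ℕ → Set X} {en : ℕ → X → E}
    (hf : Continuous f) (hf0 : ∀ z, 0 ≤ f z) (hp : 0 < p)
    (hgrowth : ∀ z, f z ≤ C * (‖z‖ ^ p + 1)) (hAn : ∀ n, MeasurableSet (An n))
    (hen : ∀ n, MemLp ((An n).indicator (en n)) (ENNReal.ofReal p) μ)
    (hbdd : BddAbove (range fun n => lpNorm ((An n).indicator (en n)) (ENNReal.ofReal p) μ)) :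
    IsCoboundedUnder (· ≥ ·) atTop fun n => ∫ x in An n, f (en n x) ∂μ := by
  obtain ⟨M, hM⟩ := hbdd
  have hC : 0 ≤ C := by simpa [Real.zero_rpow hp.ne'] using (hf0 0).trans (hgrowth 0)
  refine isCoboundedUnder_ge_of_le atTop (x := C * (M ^ p + μ.real univ)) fun n => ?_
  calc ∫ x in An n, f (en n x) ∂μ = ∫ x in An n, f ((An n).indicator (en n) x) ∂μ :=
        setIntegral_congr_fun (hAn n) fun x hx => by rw [indicator_of_mem hx]
    _ ≤ ∫ x, f ((An n).indicator (en n) x) ∂μ :=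
        setIntegral_le_integral ((hen n).integrable_comp_of_growth hf hf0 hp hgrowth)
          (.of_forall fun _ => hf0 _)
    _ ≤ C * (lpNorm ((An n).indicator (en n)) (ENNReal.ofReal p) μ ^ p + μ.real univ) :=
        (hen n).integral_comp_le_of_growth hf hf0 hp hgrowth
    _ ≤ C * (M ^ p + μ.real univ) := by
        gcongr
        · exact lpNorm_nonneg
        · exact hM (mem_range_self n)

end Growth

theorem setIntegral_comp_le_liminf_of_weak_tendsto {X E : Type*} [MeasurableSpace X]
    {μ : Measure X} [IsFiniteMeasure μ] [NormedAddCommGroup E] [InnerProductSpace ℝ E]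
    [FiniteDimensional ℝ E] {A : Set X} {An : ℕ → Set X} {e : X → E} {en : ℕ → X → E}
    {f : E → ℝ} (hconv : ConvexOn ℝ univ f) (hf0 : ∀ z, 0 ≤ f z) {p q C : ℝ}
    (hpq : p.HolderConjugate q) (hgrowth : ∀ z, f z ≤ C * (‖z‖ ^ p + 1))
    (hA : MeasurableSet A) (hAn : ∀ n, MeasurableSet (An n))
    (hχ : Tendsto (fun n => ∫ x, |(An n).indicator (fun _ => (1 : ℝ)) x -
      A.indicator (fun _ => (1 : ℝ)) x| ∂μ) atTop (nhds 0))
    (he : MemLp (A.indicator e) (ENNReal.ofReal p) μ)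
    (hen : ∀ n, MemLp ((An n).indicator (en n)) (ENNReal.ofReal p) μ)
    (hweak : ∀ g : X → E, MemLp g (ENNReal.ofReal q) μ →
      Tendsto (fun n => ∫ x, ⟪(An n).indicator (en n) x, g x⟫ ∂μ) atTop
        (nhds (∫ x, ⟪A.indicator e x, g x⟫ ∂μ))) :
    ∫ x in A, f (e x) ∂μ ≤ liminf (fun n => ∫ x in An n, f (en n x) ∂μ) atTop := by
  have hf : Continuous f := continuousOn_univ.1 (hconv.continuousOn isOpen_univ)
  obtain ⟨l, c, hle, hsup⟩ := hconv.real_univ_sSup_of_nat_affine_eq hf.lowerSemicontinuous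
  set L : ℕ → E → ℝ := fun i => l i + const E (c i)
  have hL : ∀ i, Continuous (L i) := fun i => (l i).continuous.add continuous_const
  have hlub : ∀ z, IsLUB (range fun i => L i z) (f z) := fun z => by
    have hbdd : BddAbove (range fun i => L i z) := ⟨f z, forall_mem_range.2 fun i => hle i z⟩
    simpa [← iSup_apply, hsup] using isLUB_ciSup hbdd
  have hLint : ∀ i {S} {u : X → E}, IntegrableOn u S μ → IntegrableOn (fun x => L i (u x)) S μ :=
    fun i _ _ hu => ((l i).integrable_comp hu).add (integrable_const (c i))
  have hp1 : 1 ≤ ENNReal.ofReal p := ENNReal.one_le_ofReal.2 hpq.lt.le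
  have heA : IntegrableOn e A μ := (integrable_indicator_iff hA).1 (he.integrable hp1)
  have henA : ∀ n, IntegrableOn (en n) (An n) μ :=
    fun n => (integrable_indicator_iff (hAn n)).1 ((hen n).integrable hp1)
  have hfe : IntegrableOn (fun x => f (e x)) A μ :=
    (he.integrable_comp_of_growth hf hf0 hpq.pos hgrowth).integrableOn.congr_fun
      (fun x hx => by simp only [indicator_of_mem hx]) hA
  have hfen : ∀ n, IntegrableOn (fun x => f (en n x)) (An n) μ := fun n =>
    ((hen n).integrable_comp_of_growth hf hf0 hpq.pos hgrowth).integrableOn.congr_fun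
      (fun x hx => by simp only [indicator_of_mem hx]) (hAn n)
  have hbdd := isCoboundedUnder_setIntegral_comp_of_growth hf hf0 hpq.pos hgrowth hAn hen
    (bddAbove_lpNorm_of_forall_tendsto_integral_inner hpq hen fun g hg => ⟨_, hweak g hg⟩)
  refine le_of_tendsto (tendsto_integral_partialSups_comp hL hlub heA.1 (hLint 0 heA) hfe)
    (.of_forall fun k => ?_)
  exact setIntegral_partialSups_le_liminf hL hle hf0 hA hAn heA.1 (fun i => hLint i heA)
    (fun i n => hLint i (henA n)) hfen hbdd
    (fun i B hB => tendsto_setIntegral_inter_affine hA hAn hχ hweak heA henA (l i) (c i) hB) k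

theorem stmt18_general (d : ℕ) (E : Type*) [NormedAddCommGroup E] [InnerProductSpace ℝ E]
    [FiniteDimensional ℝ E]
    (Ω : Set (EuclideanSpace ℝ (Fin d))) (hbdd : Bornology.IsBounded Ω)
    (f : E → ℝ) (hconv : ConvexOn ℝ Set.univ f) (hnonneg : ∀ ζ, 0 ≤ f ζ)
    (p q cgrow : ℝ) (hp : 1 < p) (hpq : 1 / p + 1 / q = 1)
    (hgrowth : ∀ ζ, f ζ ≤ cgrow * (‖ζ‖ ^ p + 1))
    (A : Set (EuclideanSpace ℝ (Fin d))) (An : ℕ → Set (EuclideanSpace ℝ (Fin d)))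
    (hA : MeasurableSet A) (hAn : ∀ n, MeasurableSet (An n))
    (hAΩ : A ⊆ Ω) (hAnΩ : ∀ n, An n ⊆ Ω)
    -- `χ_{A_n} → χ_A` in `L¹(Ω)`:
    (hχ : Tendsto (fun n => ∫ x in Ω,
        |Set.indicator (An n) (fun _ => (1:ℝ)) x - Set.indicator A (fun _ => (1:ℝ)) x|)
      atTop (nhds 0))
    (e : EuclideanSpace ℝ (Fin d) → E) (en : ℕ → EuclideanSpace ℝ (Fin d) → E)
    (he : MemLp (Set.indicator A e) (ENNReal.ofReal p) (volume.restrict Ω))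
    (hen : ∀ n, MemLp (Set.indicator (An n) (en n)) (ENNReal.ofReal p) (volume.restrict Ω))
    -- `e_n χ_{A_n} ⇀ e χ_A` weakly in `L^p(Ω)`:
    (hweak : ∀ g : EuclideanSpace ℝ (Fin d) → E,
      MemLp g (ENNReal.ofReal q) (volume.restrict Ω) →
      Tendsto (fun n => ∫ x in Ω, ⟪Set.indicator (An n) (en n) x, g x⟫) atTop
        (nhds (∫ x in Ω, ⟪Set.indicator A e x, g x⟫))) :
    (∫ x in A, f (e x)) ≤ Filter.atTop.liminf (fun n => ∫ x in An n, f (en n x)) := by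
  have : IsFiniteMeasure (volume.restrict Ω) := isFiniteMeasure_restrict.2 hbdd.measure_lt_top.ne
  have hres : ∀ S, S ⊆ Ω → MeasurableSet S → ∀ F : EuclideanSpace ℝ (Fin d) → ℝ,
      ∫ x in S, F x = ∫ x in S, F x ∂(volume.restrict Ω) := fun S hS hSm F => by
    rw [Measure.restrict_restrict hSm, inter_eq_self_of_subset_left hS]
  simp only [hres A hAΩ hA, fun n => hres _ (hAnΩ n) (hAn n)]
  have hpq' : p.HolderConjugate q :=
    Real.holderConjugate_iff.2 ⟨hp, by simpa only [one_div] using hpq⟩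
  exact setIntegral_comp_le_liminf_of_weak_tendsto hconv hnonneg hpq' hgrowth hA hAn hχ he hen hweak

theorem stmt18 (d : ℕ) (E : Type*) [NormedAddCommGroup E] [InnerProductSpace ℝ E]
    [FiniteDimensional ℝ E] [MeasurableSpace E] [BorelSpace E]
    (Ω : Set (EuclideanSpace ℝ (Fin d))) (hΩ : IsOpen Ω) (hbdd : Bornology.IsBounded Ω)
    (f : E → ℝ) (hconv : ConvexOn ℝ Set.univ f) (hnonneg : ∀ ζ, 0 ≤ f ζ)
    (p q cgrow : ℝ) (hp : 1 < p) (hpq : 1 / p + 1 / q = 1) (hcgrow : 0 < cgrow)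
    (hgrowth : ∀ ζ, f ζ ≤ cgrow * (‖ζ‖ ^ p + 1))
    (A : Set (EuclideanSpace ℝ (Fin d))) (An : ℕ → Set (EuclideanSpace ℝ (Fin d)))
    (hA : MeasurableSet A) (hAn : ∀ n, MeasurableSet (An n))
    (hAΩ : A ⊆ Ω) (hAnΩ : ∀ n, An n ⊆ Ω)
    -- `χ_{A_n} → χ_A` in `L¹(Ω)`:
    (hχ : Tendsto (fun n => ∫ x in Ω,
        |Set.indicator (An n) (fun _ => (1:ℝ)) x - Set.indicator A (fun _ => (1:ℝ)) x|)
      atTop (nhds 0))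
    (e : EuclideanSpace ℝ (Fin d) → E) (en : ℕ → EuclideanSpace ℝ (Fin d) → E)
    (he : MemLp (Set.indicator A e) (ENNReal.ofReal p) (volume.restrict Ω))
    (hen : ∀ n, MemLp (Set.indicator (An n) (en n)) (ENNReal.ofReal p) (volume.restrict Ω))
    -- `e_n χ_{A_n} ⇀ e χ_A` weakly in `L^p(Ω)`:
    (hweak : ∀ g : EuclideanSpace ℝ (Fin d) → E,
      MemLp g (ENNReal.ofReal q) (volume.restrict Ω) →
      Tendsto (fun n => ∫ x in Ω, ⟪Set.indicator (An n) (en n) x, g x⟫) atTop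
        (nhds (∫ x in Ω, ⟪Set.indicator A e x, g x⟫))) :
    (∫ x in A, f (e x)) ≤ Filter.atTop.liminf (fun n => ∫ x in An n, f (en n x)) :=
  stmt18_general d E Ω hbdd f hconv hnonneg p q cgrow hp hpq hgrowth A An hA hAn hAΩ hAnΩ hχ e en he
    hen hweak
end
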